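/- arXiv:2302.02953 — 4 statements merged into one kernel-verified Lean document; each statement's English description precedes it below -/
import Mathlib

section
/- For every U in SU(2) there exists O in SO(3) such that for every matrix A ∈ M₃(ℂ) and every ρ ∈ M₂(ℂ): U† · 𝓛_A(U ρ U†) · U = 𝓛_{A'}(ρ), where A' = Oᵀ A O (with the real entries of O regarded as complex scalars). That is, unitary conjugation of the GKS dissipator by an element of SU(2) results in conjugation of the GKS matrix A by a corresponding element of SO(3). -/
open Matrix

/-- The Pauli matrices `σ₁, σ₂, σ₃` as elements of `M₂(ℂ)`. -/
noncomputable def pauli : Fin 3 → Matrix (Fin 2) (Fin 2) ℂ :=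
  ![!![0, 1; 1, 0], !![0, -Complex.I; Complex.I, 0], !![1, 0; 0, -1]]

/-- The GKS dissipator `𝓛_A(ρ) = (1/2) Σᵢⱼ Aᵢⱼ ([σᵢ, ρ σⱼ] + [σᵢ ρ, σⱼ])` on `M₂(ℂ)`,
with `[X, Y] = XY − YX`. -/
noncomputable def gksDissipator (A : Matrix (Fin 3) (Fin 3) ℂ)
    (ρ : Matrix (Fin 2) (Fin 2) ℂ) : Matrix (Fin 2) (Fin 2) ℂ :=
  ((1 : ℂ) / 2) • ∑ i : Fin 3, ∑ j : Fin 3, A i j •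
    ((pauli i * (ρ * pauli j) - ρ * pauli j * pauli i) +
      (pauli i * ρ * pauli j - pauli j * (pauli i * ρ)))

set_option maxHeartbeats 1000000 in
/-- For every `U ∈ SU(2)` there exists `O ∈ SO(3)` such that for every GKS
matrix `A ∈ M₃(ℂ)` and every `ρ ∈ M₂(ℂ)`, `U† 𝓛_A(U ρ U†) U = 𝓛_{Oᵀ A O}(ρ)`. -/
theorem gks_conj_by_su2_eq_so3_conj (U : Matrix (Fin 2) (Fin 2) ℂ)
    (hU : U * Uᴴ = 1 ∧ Uᴴ * U = 1) (hdet : U.det = 1) :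
    ∃ O : Matrix (Fin 3) (Fin 3) ℝ, O * Oᵀ = 1 ∧ O.det = 1 ∧
      ∀ (A : Matrix (Fin 3) (Fin 3) ℂ) (ρ : Matrix (Fin 2) (Fin 2) ℂ),
        Uᴴ * gksDissipator A (U * ρ * Uᴴ) * U =
          gksDissipator ((O.map Complex.ofReal)ᵀ * A * O.map Complex.ofReal) ρ := by
  obtain ⟨hU1, hU2⟩ := hU
  have hadj : Uᴴ = !![U 1 1, -(U 0 1); -(U 1 0), U 0 0] := by
    have h1 : U⁻¹ = Uᴴ := Matrix.inv_eq_left_inv hU2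
    rw [← h1, Matrix.inv_def, hdet, Matrix.adjugate_fin_two]
    simp
  set x := (U 0 0).re with hx
  set y := (U 0 0).im with hy
  set z := (U 0 1).re with hz
  set w := (U 0 1).im with hw
  have e11 : U 1 1 = (starRingEnd ℂ) (U 0 0) := by
    have h := congrFun (congrFun hadj 0) 0
    rw [Matrix.conjTranspose_apply] at h
    simp only [Matrix.cons_val', Matrix.cons_val_zero, Matrix.empty_val',
      Matrix.cons_val_fin_one, Matrix.of_apply, Matrix.cons_val_one,
      Matrix.head_cons] at h
    exact h.symm
  have e10 : U 1 0 = -((starRingEnd ℂ) (U 0 1)) := by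
    have h := congrFun (congrFun hadj 0) 1
    rw [Matrix.conjTranspose_apply] at h
    simp only [Matrix.cons_val', Matrix.cons_val_one, Matrix.head_cons,
      Matrix.empty_val', Matrix.cons_val_fin_one, Matrix.cons_val_zero,
      Matrix.of_apply] at h
    have h2 := congrArg star h
    simpa using h2
  have hUeq : U = !![(x : ℂ) + y * Complex.I, (z : ℂ) + w * Complex.I;
      -(z : ℂ) + w * Complex.I, (x : ℂ) - y * Complex.I] := by
    ext i j
    fin_cases i <;> fin_cases j <;>
      simp [e10, e11, Complex.ext_iff, hx, hy, hz, hw]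
  have hUheq : Uᴴ = !![(x : ℂ) - y * Complex.I, -(z : ℂ) - w * Complex.I;
      (z : ℂ) - w * Complex.I, (x : ℂ) + y * Complex.I] := by
    rw [hadj, e10, e11]
    ext i j
    fin_cases i <;> fin_cases j <;>
      simp [Complex.ext_iff, hx, hy, hz, hw]
  have hs : x ^ 2 + y ^ 2 + z ^ 2 + w ^ 2 = 1 := by
    have hd := hdet
    rw [Matrix.det_fin_two, hUeq] at hd
    simp [Complex.ext_iff, Complex.mul_re, Complex.add_re, Complex.add_im,
      Complex.sub_re, Complex.sub_im, Complex.neg_re, Complex.neg_im,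
      Complex.mul_im] at hd
    obtain ⟨h3, -⟩ := hd
    linear_combination h3
  refine ⟨!![x^2 - y^2 - z^2 + w^2, 2*(z*w + x*y), 2*(y*w - x*z);
      2*(z*w - x*y), x^2 - y^2 + z^2 - w^2, 2*(y*z + x*w);
      2*(y*w + x*z), 2*(y*z - x*w), x^2 + y^2 - z^2 - w^2], ?_, ?_, ?_⟩
  · have hOT : (!![x^2 - y^2 - z^2 + w^2, 2*(z*w + x*y), 2*(y*w - x*z);
        2*(z*w - x*y), x^2 - y^2 + z^2 - w^2, 2*(y*z + x*w);
        2*(y*w + x*z), 2*(y*z - x*w), x^2 + y^2 - z^2 - w^2] : Matrix (Fin 3) (Fin 3) ℝ)ᵀ =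
        !![x^2 - y^2 - z^2 + w^2, 2*(z*w - x*y), 2*(y*w + x*z);
        2*(z*w + x*y), x^2 - y^2 + z^2 - w^2, 2*(y*z - x*w);
        2*(y*w - x*z), 2*(y*z + x*w), x^2 + y^2 - z^2 - w^2] := by
      ext a b
      fin_cases a <;> fin_cases b <;> simp
    rw [hOT]
    ext i j
    fin_cases i <;> fin_cases j <;>
      simp [Matrix.mul_apply, Fin.sum_univ_three,
        Matrix.one_apply] <;>
      first
        | ring1
        | linear_combination (x^2 + y^2 + z^2 + w^2 + 1) * hs
        | linear_combination (-(x^2 + y^2 + z^2 + w^2 + 1)) * hs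
  · rw [Matrix.det_fin_three]
    simp only [Matrix.cons_val', Matrix.cons_val_zero, Matrix.cons_val_one,
      Matrix.head_cons, Matrix.empty_val', Matrix.cons_val_fin_one,
      Matrix.head_fin_const, Matrix.cons_val_two, Matrix.tail_cons,
      Matrix.of_apply, Matrix.tail_val', Matrix.head_val']
    linear_combination ((x^2+y^2+z^2+w^2)^2 + (x^2+y^2+z^2+w^2) + 1) * hs
  · intro A ρ
    -- conjugation is multiplicative
    have hmul : ∀ X Y : Matrix (Fin 2) (Fin 2) ℂ,
        Uᴴ * (X * Y) * U = (Uᴴ * X * U) * (Uᴴ * Y * U) := by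
      intro X Y
      calc Uᴴ * (X * Y) * U = Uᴴ * X * (U * Uᴴ) * Y * U := by rw [hU1]; noncomm_ring
        _ = (Uᴴ * X * U) * (Uᴴ * Y * U) := by noncomm_ring
    have hρconj : Uᴴ * (U * ρ * Uᴴ) * U = ρ := by
      calc Uᴴ * (U * ρ * Uᴴ) * U = (Uᴴ * U) * ρ * (Uᴴ * U) := by noncomm_ring
        _ = ρ := by rw [hU2]; simp
    -- the conjugated Pauli matrices
    have hσ0 : Uᴴ * pauli 0 * U =
        ((x:ℂ)^2 - y^2 - z^2 + w^2) • pauli 0 + (2*((z:ℂ)*w + x*y)) • pauli 1 +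
          (2*((y:ℂ)*w - x*z)) • pauli 2 := by
      rw [hUheq, hUeq]
      ext a b
      fin_cases a <;> fin_cases b <;>
        · simp [pauli, Matrix.mul_apply, Fin.sum_univ_two, Complex.ext_iff,
            Complex.add_re, Complex.add_im, Complex.sub_re, Complex.sub_im,
            Complex.mul_re, Complex.mul_im, Complex.neg_re, Complex.neg_im,
            Complex.I_re, Complex.I_im, pow_two]
          first
            | (constructor <;> ring1)
            | ring1
    have hσ1 : Uᴴ * pauli 1 * U =
        (2*((z:ℂ)*w - x*y)) • pauli 0 + ((x:ℂ)^2 - y^2 + z^2 - w^2) • pauli 1 +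
          (2*((y:ℂ)*z + x*w)) • pauli 2 := by
      rw [hUheq, hUeq]
      ext a b
      fin_cases a <;> fin_cases b <;>
        · simp [pauli, Matrix.mul_apply, Fin.sum_univ_two, Complex.ext_iff,
            Complex.add_re, Complex.add_im, Complex.sub_re, Complex.sub_im,
            Complex.mul_re, Complex.mul_im, Complex.neg_re, Complex.neg_im,
            Complex.I_re, Complex.I_im, pow_two]
          first
            | (constructor <;> ring1)
            | ring1
    have hσ2 : Uᴴ * pauli 2 * U =
        (2*((y:ℂ)*w + x*z)) • pauli 0 + (2*((y:ℂ)*z - x*w)) • pauli 1 +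
          ((x:ℂ)^2 + y^2 - z^2 - w^2) • pauli 2 := by
      rw [hUheq, hUeq]
      ext a b
      fin_cases a <;> fin_cases b <;>
        · simp [pauli, Matrix.mul_apply, Fin.sum_univ_two, Complex.ext_iff,
            Complex.add_re, Complex.add_im, Complex.sub_re, Complex.sub_im,
            Complex.mul_re, Complex.mul_im, Complex.neg_re, Complex.neg_im,
            Complex.I_re, Complex.I_im, pow_two]
          first
            | (constructor <;> ring1)
            | ring1
    have hOC : ((!![x^2 - y^2 - z^2 + w^2, 2*(z*w + x*y), 2*(y*w - x*z);
        2*(z*w - x*y), x^2 - y^2 + z^2 - w^2, 2*(y*z + x*w);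
        2*(y*w + x*z), 2*(y*z - x*w), x^2 + y^2 - z^2 - w^2] :
          Matrix (Fin 3) (Fin 3) ℝ).map Complex.ofReal) =
        !![(x:ℂ)^2 - y^2 - z^2 + w^2, 2*((z:ℂ)*w + x*y), 2*((y:ℂ)*w - x*z);
        2*((z:ℂ)*w - x*y), (x:ℂ)^2 - y^2 + z^2 - w^2, 2*((y:ℂ)*z + x*w);
        2*((y:ℂ)*w + x*z), 2*((y:ℂ)*z - x*w), (x:ℂ)^2 + y^2 - z^2 - w^2] := by
      ext a b
      fin_cases a <;> fin_cases b <;>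
        simp [Matrix.map_apply] <;> push_cast <;> ring1
    -- the per-term conjugation identity
    have key : ∀ i j : Fin 3,
        Uᴴ * ((pauli i * (U * ρ * Uᴴ * pauli j) - U * ρ * Uᴴ * pauli j * pauli i) +
          (pauli i * (U * ρ * Uᴴ) * pauli j - pauli j * (pauli i * (U * ρ * Uᴴ)))) * U =
        ((Uᴴ * pauli i * U) * (ρ * (Uᴴ * pauli j * U)) -
            ρ * (Uᴴ * pauli j * U) * (Uᴴ * pauli i * U)) +
          ((Uᴴ * pauli i * U) * ρ * (Uᴴ * pauli j * U) -
            (Uᴴ * pauli j * U) * ((Uᴴ * pauli i * U) * ρ)) := by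
      intro i j
      rw [Matrix.mul_add, Matrix.add_mul, Matrix.mul_sub, Matrix.sub_mul,
        Matrix.mul_sub, Matrix.sub_mul]
      simp only [hmul (pauli i) (U * ρ * Uᴴ * pauli j),
        hmul (U * ρ * Uᴴ * pauli j) (pauli i),
        hmul (pauli i * (U * ρ * Uᴴ)) (pauli j),
        hmul (pauli j) (pauli i * (U * ρ * Uᴴ)),
        hmul (U * ρ * Uᴴ) (pauli j), hmul (pauli i) (U * ρ * Uᴴ), hρconj]
      try noncomm_ring
    have hOCT : (!![(x:ℂ)^2 - y^2 - z^2 + w^2, 2*((z:ℂ)*w + x*y), 2*((y:ℂ)*w - x*z);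
        2*((z:ℂ)*w - x*y), (x:ℂ)^2 - y^2 + z^2 - w^2, 2*((y:ℂ)*z + x*w);
        2*((y:ℂ)*w + x*z), 2*((y:ℂ)*z - x*w), (x:ℂ)^2 + y^2 - z^2 - w^2] : Matrix (Fin 3) (Fin 3) ℂ)ᵀ =
        !![(x:ℂ)^2 - y^2 - z^2 + w^2, 2*((z:ℂ)*w - x*y), 2*((y:ℂ)*w + x*z);
        2*((z:ℂ)*w + x*y), (x:ℂ)^2 - y^2 + z^2 - w^2, 2*((y:ℂ)*z - x*w);
        2*((y:ℂ)*w - x*z), 2*((y:ℂ)*z + x*w), (x:ℂ)^2 + y^2 - z^2 - w^2] := by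
      ext a b
      fin_cases a <;> fin_cases b <;> simp
    rw [hOC, hOCT]
    simp only [gksDissipator, Matrix.mul_sum, Matrix.sum_mul, Matrix.mul_smul,
      Matrix.smul_mul]
    simp only [key]
    simp only [Fin.sum_univ_three]
    simp only [hσ0, hσ1, hσ2]
    simp only [Matrix.mul_apply, Fin.sum_univ_three]
    simp only [Matrix.cons_val', Matrix.cons_val_zero, Matrix.cons_val_one,
      Matrix.head_cons, Matrix.empty_val', Matrix.cons_val_fin_one,
      Matrix.head_fin_const, Matrix.cons_val_two, Matrix.tail_cons,
      Matrix.of_apply]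
    simp only [Matrix.add_mul, Matrix.mul_add, Matrix.smul_mul, Matrix.mul_smul,
      smul_add, smul_sub, smul_smul]
    module
end

section
/- For every vector a ∈ ℂ³ with ‖a‖ = 1 there exist θ ∈ [−π/4, π/4] and a real 3×3 matrix G in SO(3) such that a aᴴ = Gᵀ (v(θ) v(θ)ᴴ) G, where v(θ) = (cos θ, −i sin θ, 0)ᵀ ∈ ℂ³, aᴴ denotes the conjugate-transpose row vector (so a aᴴ is the 3×3 rank-one matrix with entries aᵢ conj(aⱼ)), and the real entries of G are regarded as complex scalars. Consequently every rank-one GKS matrix A = a aᴴ with unit vector a can be brought to the normal form A(θ) = v(θ) v(θ)ᴴ by conjugation with an element of SO(3). -/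
/-!
Multiply `a` by a phase `z` that makes `∑ (z aᵢ)²` real and nonnegative, and write
`z a = p - i q` with `p, q ∈ ℝ³`. Then `|p|² + |q|² = 1`, `|p|² - |q|² ≥ 0` and `p ⬝ q = 0`, so
`|p| = cos θ`, `|q| = sin θ` for some `θ ∈ [0, π/4]` and `p = cos θ u`, `q = sin θ w` for an
orthonormal pair `u, w`. The rotation `G` with rows `u, w, u × w` has `Gᵀ v(θ) = z a`, hence
`Gᵀ (v vᴴ) G = (z a)(z a)ᴴ = a aᴴ`.
-/

open Matrix

/-- The normal-form vector `v(θ) = (cos θ, −i sin θ, 0)ᵀ ∈ ℂ³`. -/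
noncomputable def normalFormVec (θ : ℝ) : Fin 3 → ℂ :=
  ![(Real.cos θ : ℂ), -Complex.I * (Real.sin θ : ℂ), 0]

/-- The rank-one outer product `a aᴴ` of a complex 3-vector, with `(i,j)` entry
`aᵢ · conj(aⱼ)`. -/
noncomputable def outer (a : Fin 3 → ℂ) : Matrix (Fin 3) (Fin 3) ℂ :=
  Matrix.of fun i j => a i * (starRingEnd ℂ) (a j)

section unitVec
variable {ι : Type*} [Fintype ι]

noncomputable def unitVec (v : ι → ℝ) : ι → ℝ := (√(v ⬝ᵥ v))⁻¹ • v

lemma dotProduct_self_nonneg (v : ι → ℝ) : 0 ≤ v ⬝ᵥ v :=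
  Finset.sum_nonneg fun i _ => mul_self_nonneg (v i)

lemma dotProduct_self_pos {v : ι → ℝ} (hv : v ≠ 0) : 0 < v ⬝ᵥ v :=
  (dotProduct_self_nonneg v).lt_of_ne' (dotProduct_self_eq_zero.not.mpr hv)

lemma unitVec_dotProduct_self {v : ι → ℝ} (hv : v ≠ 0) :
    unitVec v ⬝ᵥ unitVec v = 1 := by
  have hpos := dotProduct_self_pos hv
  rw [unitVec, smul_dotProduct, dotProduct_smul, smul_eq_mul, smul_eq_mul, ← mul_assoc, ← mul_inv,
    Real.mul_self_sqrt hpos.le, inv_mul_cancel₀ hpos.ne']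

lemma sqrt_smul_unitVec (v : ι → ℝ) : √(v ⬝ᵥ v) • unitVec v = v := by
  rcases eq_or_ne v 0 with rfl | hv
  · simp
  · exact smul_inv_smul₀ (Real.sqrt_ne_zero'.mpr (dotProduct_self_pos hv)) v

lemma dotProduct_unitVec {u v : ι → ℝ} (huv : u ⬝ᵥ v = 0) : u ⬝ᵥ unitVec v = 0 := by
  rw [unitVec, dotProduct_smul, huv, smul_zero]

end unitVec

lemma exists_unit_dotProduct_eq_zero {n : ℕ} (u : Fin (n + 2) → ℝ) :
    ∃ w : Fin (n + 2) → ℝ, w ⬝ᵥ w = 1 ∧ u ⬝ᵥ w = 0 := by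
  -- the matrix all of whose rows are `u` is singular
  obtain ⟨v, hv, huv⟩ : ∃ v ≠ 0, (Matrix.of fun _ : Fin (n + 2) => u) *ᵥ v = 0 :=
    exists_mulVec_eq_zero_iff.mpr (det_zero_of_row_eq (i := 0) (j := 1) (by simp) rfl)
  exact ⟨unitVec v, unitVec_dotProduct_self hv, dotProduct_unitVec (congrFun huv 0)⟩

lemma exists_orthonormal_smul_eq {n : ℕ} {p q : Fin (n + 2) → ℝ} (hp : p ≠ 0) (hpq : p ⬝ᵥ q = 0) :
    ∃ u w : Fin (n + 2) → ℝ, u ⬝ᵥ u = 1 ∧ w ⬝ᵥ w = 1 ∧ u ⬝ᵥ w = 0 ∧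
      p = √(p ⬝ᵥ p) • u ∧ q = √(q ⬝ᵥ q) • w := by
  have hu := unitVec_dotProduct_self hp
  have hpu := (sqrt_smul_unitVec p).symm
  rcases eq_or_ne q 0 with rfl | hq
  · obtain ⟨w, hw, huw⟩ := exists_unit_dotProduct_eq_zero (unitVec p)
    exact ⟨unitVec p, w, hu, hw, huw, hpu, by simp⟩
  · refine ⟨unitVec p, unitVec q, hu, unitVec_dotProduct_self hq, ?_, hpu,
      (sqrt_smul_unitVec q).symm⟩
    rw [unitVec, smul_dotProduct, dotProduct_unitVec hpq, smul_zero]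

def frameMatrix {R : Type*} [CommRing R] (u w : Fin 3 → R) : Matrix (Fin 3) (Fin 3) R :=
  Matrix.of ![u, w, u ⨯₃ w]

section frame
variable {R : Type*} [CommRing R] {u w : Fin 3 → R}

lemma frameMatrix_mul_transpose (hu : u ⬝ᵥ u = 1) (hw : w ⬝ᵥ w = 1) (huw : u ⬝ᵥ w = 0) :
    frameMatrix u w * (frameMatrix u w)ᵀ = 1 := by
  have hc : u ⨯₃ w ⬝ᵥ u ⨯₃ w = 1 := by
    rw [cross_dot_cross, hu, hw, huw, dotProduct_comm w u, huw]; ring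
  have hcu : u ⨯₃ w ⬝ᵥ u = 0 := by rw [dotProduct_comm, dot_self_cross]
  have hcw : u ⨯₃ w ⬝ᵥ w = 0 := by rw [dotProduct_comm, dot_cross_self]
  ext i j
  change ![u, w, u ⨯₃ w] i ⬝ᵥ ![u, w, u ⨯₃ w] j = (1 : Matrix (Fin 3) (Fin 3) R) i j
  fin_cases i <;> fin_cases j <;> simp [hu, hw, hc, huw, hcu, hcw, dotProduct_comm w u]

lemma det_frameMatrix (hu : u ⬝ᵥ u = 1) (hw : w ⬝ᵥ w = 1) (huw : u ⬝ᵥ w = 0) :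
    (frameMatrix u w).det = 1 := by
  change Matrix.det ![u, w, u ⨯₃ w] = 1
  rw [← triple_product_eq_det, triple_product_permutation, triple_product_permutation,
    cross_dot_cross, hu, hw, huw, dotProduct_comm w u, huw]
  ring

end frame

lemma frameMatrix_conjTranspose_mulVec_normalFormVec (u w : Fin 3 → ℝ) (θ : ℝ) :
    ((frameMatrix u w).map Complex.ofReal)ᴴ *ᵥ normalFormVec θ =
      fun i => ((Real.cos θ • u) i : ℂ) - ((Real.sin θ • w) i : ℂ) * Complex.I := by
  ext i
  simp [frameMatrix, normalFormVec, mulVec, dotProduct, Fin.sum_univ_three]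
  ring

open Real in
lemma exists_mem_Icc_cos_eq_sqrt_sin_eq_sqrt {x y : ℝ} (hy : 0 ≤ y) (hyx : y ≤ x)
    (hxy : x + y = 1) :
    ∃ θ ∈ Set.Icc (-(π / 4)) (π / 4), cos θ = √x ∧ sin θ = √y := by
  have hx1 : √x ≤ 1 := Real.sqrt_le_one.mpr (by linarith)
  refine ⟨arccos √x, ⟨?_, ?_⟩, cos_arccos (by linarith [Real.sqrt_nonneg x]) hx1, ?_⟩
  · linarith [arccos_nonneg √x, pi_pos]
  · rw [arccos_le_pi_div_four, Real.le_sqrt' (by positivity), div_pow, sq_sqrt zero_le_two]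
    linarith
  · rw [sin_arccos, sq_sqrt (by linarith), ← hxy, add_sub_cancel_left]

open Complex

lemma outer_eq_vecMulVec (a : Fin 3 → ℂ) : outer a = vecMulVec a (star a) := rfl

lemma outer_conjTranspose_mulVec (M : Matrix (Fin 3) (Fin 3) ℂ) (a : Fin 3 → ℂ) :
    outer (Mᴴ *ᵥ a) = Mᴴ * outer a * M := by
  rw [outer_eq_vecMulVec, outer_eq_vecMulVec, star_mulVec, mul_vecMulVec, vecMulVec_mul,
    conjTranspose_conjTranspose]

lemma outer_smul {z : ℂ} (hz : ‖z‖ = 1) (a : Fin 3 → ℂ) : outer (z • a) = outer a := by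
  have hzz : z * (starRingEnd ℂ) z = 1 := by
    rw [mul_conj, normSq_eq_norm_sq, hz]; norm_num
  ext i j
  simp only [outer, of_apply, Pi.smul_apply, smul_eq_mul, map_mul]
  linear_combination a i * (starRingEnd ℂ) (a j) * hzz

lemma conjTranspose_map_ofReal {m n : Type*} (M : Matrix m n ℝ) :
    (M.map ofReal)ᴴ = (M.map ofReal)ᵀ := by
  ext i j; simp

lemma exists_norm_eq_one_sq_mul_eq_norm (s : ℂ) : ∃ z : ℂ, ‖z‖ = 1 ∧ z ^ 2 * s = ‖s‖ := by
  set t := s.arg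
  refine ⟨exp ((-(t / 2) : ℝ) * I), norm_exp_ofReal_mul_I _, ?_⟩
  calc exp ((-(t / 2) : ℝ) * I) ^ 2 * s
      = exp ((-(t / 2) : ℝ) * I) ^ 2 * (‖s‖ * exp (t * I)) := by rw [norm_mul_exp_arg_mul_I]
    _ = ‖s‖ * exp ((-(t / 2) : ℝ) * I + (-(t / 2) : ℝ) * I + t * I) := by
      rw [exp_add, exp_add]; ring
    _ = ‖s‖ := by push_cast; ring_nf; rw [exp_zero, mul_one]

lemma sum_sq_sub_mul_I {ι : Type*} [Fintype ι] (p q : ι → ℝ) :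
    ∑ i, ((p i : ℂ) - q i * I) ^ 2 =
      ((p ⬝ᵥ p - q ⬝ᵥ q : ℝ) : ℂ) - ((2 * (p ⬝ᵥ q) : ℝ) : ℂ) * I := by
  simp only [dotProduct, ofReal_sub, ofReal_mul, ofReal_sum, ofReal_ofNat, Finset.mul_sum,
    Finset.sum_mul, ← Finset.sum_sub_distrib]
  exact Finset.sum_congr rfl fun i _ => by linear_combination (q i : ℂ) ^ 2 * I_sq

lemma sum_norm_sq_sub_mul_I {ι : Type*} [Fintype ι] (p q : ι → ℝ) :
    ∑ i, ‖(p i : ℂ) - q i * I‖ ^ 2 = p ⬝ᵥ p + q ⬝ᵥ q := by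
  simp [← normSq_eq_norm_sq, normSq_apply, dotProduct, Finset.sum_add_distrib]

lemma exists_norm_eq_one_smul_eq_sub_mul_I {ι : Type*} [Fintype ι] (a : ι → ℂ) :
    ∃ z : ℂ, ‖z‖ = 1 ∧ ∃ p q : ι → ℝ, z • a = (fun i => (p i : ℂ) - q i * I) ∧
      p ⬝ᵥ p + q ⬝ᵥ q = ∑ i, ‖a i‖ ^ 2 ∧ q ⬝ᵥ q ≤ p ⬝ᵥ p ∧ p ⬝ᵥ q = 0 := by
  obtain ⟨z, hz, hzs⟩ := exists_norm_eq_one_sq_mul_eq_norm (∑ i, a i ^ 2)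
  set p : ι → ℝ := fun i => (z * a i).re
  set q : ι → ℝ := fun i => -(z * a i).im
  have hza : z • a = fun i => (p i : ℂ) - q i * I := by
    ext i; simp [p, q, Complex.ext_iff]
  have hsq : ∑ i, ((p i : ℂ) - q i * I) ^ 2 = ‖∑ i, a i ^ 2‖ := by
    simp_rw [← congrFun hza, Pi.smul_apply, smul_eq_mul, mul_pow]
    rw [← Finset.mul_sum, hzs]
  rw [sum_sq_sub_mul_I] at hsq
  have hre : p ⬝ᵥ p - q ⬝ᵥ q = ‖∑ i, a i ^ 2‖ := by simpa using congrArg re hsq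
  have him : p ⬝ᵥ q = 0 := by simpa using congrArg im hsq
  refine ⟨z, hz, p, q, hza, ?_, by linarith [norm_nonneg (∑ i, a i ^ 2)], him⟩
  simp [← sum_norm_sq_sub_mul_I, ← congrFun hza, hz]

/-- For every unit vector `a ∈ ℂ³` there exist `θ ∈ [−π/4, π/4]` and
`G ∈ SO(3)` such that `a aᴴ = Gᵀ (v(θ) v(θ)ᴴ) G` with `v(θ) = (cos θ, −i sin θ, 0)ᵀ`. -/
theorem rank_one_gks_normal_form (a : EuclideanSpace ℂ (Fin 3)) (ha : ‖a‖ = 1) :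
    ∃ θ : ℝ, θ ∈ Set.Icc (-(Real.pi / 4)) (Real.pi / 4) ∧
      ∃ G : Matrix (Fin 3) (Fin 3) ℝ, G * Gᵀ = 1 ∧ G.det = 1 ∧
        outer (fun i => a i) =
          (G.map Complex.ofReal)ᵀ * outer (normalFormVec θ) * G.map Complex.ofReal := by
  obtain ⟨z, hz, p, q, hza, hnorm, hqp, hpq⟩ := exists_norm_eq_one_smul_eq_sub_mul_I (fun i => a i)
  rw [← EuclideanSpace.norm_sq_eq, ha, one_pow] at hnorm
  have hp : p ≠ 0 := by
    rintro rfl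
    simp only [dotProduct_zero, zero_add] at hnorm hqp
    linarith
  obtain ⟨θ, hθ, hcos, hsin⟩ :=
    exists_mem_Icc_cos_eq_sqrt_sin_eq_sqrt (dotProduct_self_nonneg q) hqp hnorm
  obtain ⟨u, w, hu, hw, huw, hpu, hqw⟩ := exists_orthonormal_smul_eq hp hpq
  refine ⟨θ, hθ, frameMatrix u w, frameMatrix_mul_transpose hu hw huw,
    det_frameMatrix hu hw huw, ?_⟩
  rw [← conjTranspose_map_ofReal, ← outer_conjTranspose_mulVec,
    frameMatrix_conjTranspose_mulVec_normalFormVec, hcos, hsin, ← hpu, ← hqw, ← hza, outer_smul hz]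
end

section
/- Fix θ ∈ ℝ and t ≥ 0, and set λ₁ = e^{−2t sin²θ}, λ₂ = e^{−2t cos²θ}, λ₃ = e^{−2t}, m₃ = sin(2θ)(λ₃ − 1), a² = 1 + λ₃ + m₃, b² = 1 − λ₃ + m₃, c² = 1 − λ₃ − m₃, d² = 1 + λ₃ − m₃. Then the 4×4 complex matrix τ_θ = (1/4) · [[a², 0, 0, λ₁+λ₂], [0, b², λ₁−λ₂, 0], [0, λ₁−λ₂, c², 0], [λ₁+λ₂, 0, 0, d²]] is positive semidefinite. (This matrix is the Choi matrix of the quantum channel exp(t 𝓛_θ), and its positive semidefiniteness expresses complete positivity of the channel.) -/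
/-! The matrix is the direct sum of its 2 × 2 blocks on the coordinates {0, 3} and {1, 2}, so it
suffices that both blocks have nonnegative diagonal and determinant. Because λ₁λ₂ = λ₃, both
determinant conditions are equivalent to m₃² ≤ (1 - λ₁²)(1 - λ₂²). With C = cos 2θ one has
2t sin²θ = t - Ct and 2t cos²θ = t + Ct, and 1 - e^{-2x} = 2e^{-x} sinh x turns this inequality
into sinh²(Ct) ≤ C² sinh²t. That holds because |C| ≤ 1, sinh is convex on [0, ∞) and sinh 0 = 0. -/

open Matrix
open scoped ComplexOrder

namespace Real

theorem convexOn_sinh_Ici : ConvexOn ℝ (Set.Ici 0) sinh := by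
  refine MonotoneOn.convexOn_of_deriv (convex_Ici 0) continuous_sinh.continuousOn
    differentiable_sinh.differentiableOn ?_
  rw [deriv_sinh, interior_Ici]
  intro x hx y hy hxy
  rw [cosh_le_cosh, abs_of_pos hx, abs_of_pos hy]
  exact hxy

theorem abs_sinh_mul_le {c : ℝ} (hc : |c| ≤ 1) (x : ℝ) : |sinh (c * x)| ≤ |c| * |sinh x| := by
  have h := convexOn_sinh_Ici.2 (Set.mem_Ici.2 (abs_nonneg x)) Set.self_mem_Ici
    (abs_nonneg c) (sub_nonneg.2 hc) (add_sub_cancel _ _)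
  simp only [smul_eq_mul, mul_zero, add_zero, sinh_zero] at h
  rwa [abs_sinh, abs_sinh, abs_mul]

theorem one_sub_exp_neg_sq (x : ℝ) : 1 - exp (-x) ^ 2 = 2 * exp (-x) * sinh x := by
  have h : exp (-x) * exp x = 1 := by rw [← exp_add, neg_add_cancel, exp_zero]
  rw [sinh_eq]
  linear_combination -h

theorem sinh_sub_mul_sinh_add (x y : ℝ) :
    sinh (x - y) * sinh (x + y) = sinh x ^ 2 - sinh y ^ 2 := by
  rw [sinh_sub, sinh_add]
  linear_combination sinh x ^ 2 * cosh_sq y - sinh y ^ 2 * cosh_sq x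

theorem sin_two_mul_mul_exp_sub_one_sq_le (θ t : ℝ) :
    (sin (2 * θ) * (exp (-(2 * t)) - 1)) ^ 2 ≤
      (1 - exp (-(2 * t * sin θ ^ 2)) ^ 2) * (1 - exp (-(2 * t * cos θ ^ 2)) ^ 2) := by
  set C := cos (2 * θ) with hC
  have hsinh : sinh (C * t) ^ 2 ≤ C ^ 2 * sinh t ^ 2 := by
    simpa [mul_pow, sq_abs] using
      pow_le_pow_left₀ (abs_nonneg _) (abs_sinh_mul_le (abs_cos_le_one (2 * θ)) t) 2
  have hsin : sin (2 * θ) ^ 2 = 1 - C ^ 2 := eq_sub_of_add_eq (sin_sq_add_cos_sq _)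
  have hs : 2 * t * sin θ ^ 2 = t - C * t := by
    linear_combination (2 * t) * sin_sq_add_cos_sq θ + t * hC + t * cos_two_mul θ
  have hc : 2 * t * cos θ ^ 2 = t + C * t := by
    linear_combination -t * hC - t * cos_two_mul θ
  have hE : exp (-(2 * t)) - 1 = -(2 * exp (-t) * sinh t) := by
    rw [← one_sub_exp_neg_sq, ← exp_nat_mul]; push_cast; ring_nf
  have hprod : exp (-(t - C * t)) * exp (-(t + C * t)) = exp (-t) ^ 2 := by
    rw [← exp_add, ← exp_nat_mul]; push_cast; ring_nf
  calc (sin (2 * θ) * (exp (-(2 * t)) - 1)) ^ 2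
      = 4 * exp (-t) ^ 2 * ((1 - C ^ 2) * sinh t ^ 2) := by rw [hE, mul_pow, hsin]; ring
    _ ≤ 4 * exp (-t) ^ 2 * (sinh t ^ 2 - sinh (C * t) ^ 2) := by gcongr; linarith
    _ = 4 * (exp (-(t - C * t)) * exp (-(t + C * t))) *
          (sinh (t - C * t) * sinh (t + C * t)) := by
      rw [hprod, sinh_sub_mul_sinh_add]
    _ = _ := by rw [hs, hc, one_sub_exp_neg_sq, one_sub_exp_neg_sq]; ring

end Real

theorem two_mul_mul_mul_le_of_sq_le_mul {a d β : ℝ} (ha : 0 ≤ a) (hd : 0 ≤ d)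
    (hβ : β ^ 2 ≤ a * d) (u v : ℝ) : 2 * β * u * v ≤ a * u ^ 2 + d * v ^ 2 := by
  have h : 0 ≤ (a + d) * (a * u ^ 2 + d * v ^ 2 - 2 * β * u * v) := by
    nlinarith [sq_nonneg (a * u - β * v), sq_nonneg (d * v - β * u),
      mul_le_mul_of_nonneg_left hβ (sq_nonneg u), mul_le_mul_of_nonneg_left hβ (sq_nonneg v)]
  rcases (add_nonneg ha hd).eq_or_lt with had | had
  · have hβ0 : β = 0 := by nlinarith
    subst hβ0
    nlinarith [sq_nonneg u, sq_nonneg v]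
  · linarith [nonneg_of_mul_nonneg_right h had]

namespace Matrix

theorem posSemidef_fin_two {𝕜 : Type*} [RCLike 𝕜] {a d : ℝ} {b : 𝕜} (ha : 0 ≤ a)
    (hd : 0 ≤ d) (hb : ‖b‖ ^ 2 ≤ a * d) : !![(a : 𝕜), b; star b, (d : 𝕜)].PosSemidef := by
  refine .of_dotProduct_mulVec_nonneg ?_ fun x => ?_
  · ext i j
    fin_cases i <;> fin_cases j <;> simp
  set w := star (x 0) * b * x 1
  have hform : star x ⬝ᵥ (!![(a : 𝕜), b; star b, (d : 𝕜)] *ᵥ x) =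
      ((a * ‖x 0‖ ^ 2 + d * ‖x 1‖ ^ 2 + 2 * RCLike.re w : ℝ) : 𝕜) := by
    calc star x ⬝ᵥ (!![(a : 𝕜), b; star b, (d : 𝕜)] *ᵥ x)
        = a * (star (x 0) * x 0) + d * (star (x 1) * x 1) + (w + star w) := by
          simp [dotProduct, mulVec, Fin.sum_univ_two, w]; ring
      _ = _ := by
          simp only [RCLike.star_def, RCLike.conj_mul, RCLike.add_conj]; push_cast; ring
  have hw : |RCLike.re w| ≤ ‖b‖ * ‖x 0‖ * ‖x 1‖ := by
    refine (RCLike.abs_re_le_norm w).trans (le_of_eq ?_)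
    simp only [w, norm_mul, norm_star]; ring
  rw [hform, RCLike.ofReal_nonneg]
  have := two_mul_mul_mul_le_of_sq_le_mul ha hd hb ‖x 0‖ ‖x 1‖
  linarith [neg_abs_le (RCLike.re w)]

theorem PosSemidef.fromBlocks_zero {m n R : Type*} [Fintype m] [Fintype n] [CommRing R]
    [PartialOrder R] [StarRing R] [AddLeftMono R] {A : Matrix m m R} {D : Matrix n n R}
    (hA : A.PosSemidef) (hD : D.PosSemidef) : (fromBlocks A 0 0 D).PosSemidef := by
  refine .of_dotProduct_mulVec_nonneg (hA.1.fromBlocks (by simp) hD.1) fun x => ?_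
  simpa [fromBlocks_mulVec, dotProduct, Fintype.sum_sum_type] using
    add_nonneg (hA.dotProduct_mulVec_nonneg (x ∘ Sum.inl))
      (hD.dotProduct_mulVec_nonneg (x ∘ Sum.inr))

theorem posSemidef_fin_four_of_blocks {R : Type*} [CommRing R] [PartialOrder R]
    [StarRing R] [AddLeftMono R] {a b c d p p' q q' : R}
    (hP : !![a, p; p', d].PosSemidef) (hQ : !![b, q; q', c].PosSemidef) :
    !![a, 0, 0, p; 0, b, q, 0; 0, q', c, 0; p', 0, 0, d].PosSemidef := by
  let e : Fin 4 → Fin 2 ⊕ Fin 2 := ![.inl 0, .inr 0, .inr 1, .inl 1]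
  convert (hP.fromBlocks_zero hQ).submatrix e using 1
  ext i j
  fin_cases i <;> fin_cases j <;> rfl

end Matrix

/-- With `λ₁ = e^{−2t sin²θ}`, `λ₂ = e^{−2t cos²θ}`, `λ₃ = e^{−2t}`,
`m₃ = sin(2θ)(λ₃−1)`, `a² = 1+λ₃+m₃`, `b² = 1−λ₃+m₃`, `c² = 1−λ₃−m₃`, `d² = 1+λ₃−m₃`,
the Choi matrix
`τ_θ = (1/4)[[a²,0,0,λ₁+λ₂],[0,b²,λ₁−λ₂,0],[0,λ₁−λ₂,c²,0],[λ₁+λ₂,0,0,d²]]`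
is positive semidefinite. -/
theorem choi_matrix_posSemidef (θ t : ℝ) (ht : 0 ≤ t)
    (lam1 lam2 lam3 m3 a2 b2 c2 d2 : ℝ)
    (h1 : lam1 = Real.exp (-(2 * t * Real.sin θ ^ 2)))
    (h2 : lam2 = Real.exp (-(2 * t * Real.cos θ ^ 2)))
    (h3 : lam3 = Real.exp (-(2 * t)))
    (hm : m3 = Real.sin (2 * θ) * (lam3 - 1))
    (ha : a2 = 1 + lam3 + m3) (hb : b2 = 1 - lam3 + m3)
    (hc : c2 = 1 - lam3 - m3) (hd : d2 = 1 + lam3 - m3) :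
    (((1 : ℂ) / 4) •
      !![(a2 : ℂ), 0, 0, ((lam1 + lam2 : ℝ) : ℂ);
         0, (b2 : ℂ), ((lam1 - lam2 : ℝ) : ℂ), 0;
         0, ((lam1 - lam2 : ℝ) : ℂ), (c2 : ℂ), 0;
         ((lam1 + lam2 : ℝ) : ℂ), 0, 0, (d2 : ℂ)]).PosSemidef := by
  have hlam3_pos : 0 < lam3 := h3 ▸ Real.exp_pos _
  have hlam3_le : lam3 ≤ 1 := h3 ▸ Real.exp_le_one_iff.2 (by linarith)
  obtain ⟨hm3_ge, hm3_le⟩ : -(1 - lam3) ≤ m3 ∧ m3 ≤ 1 - lam3 := by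
    refine abs_le.1 ?_
    rw [hm, abs_mul, abs_of_nonpos (sub_nonpos.2 hlam3_le), neg_sub]
    exact mul_le_of_le_one_left (sub_nonneg.2 hlam3_le) (Real.abs_sin_le_one _)
  have hprod : lam1 * lam2 = lam3 := by
    rw [h1, h2, h3, ← Real.exp_add]
    congr 1
    linear_combination (-2 * t) * Real.sin_sq_add_cos_sq θ
  have hkey : m3 ^ 2 ≤ (1 - lam1 ^ 2) * (1 - lam2 ^ 2) := by
    rw [hm, h1, h2, h3]
    exact Real.sin_two_mul_mul_exp_sub_one_sq_le θ t
  have hP := posSemidef_fin_two (𝕜 := ℂ) (b := ((lam1 + lam2 : ℝ) : ℂ))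
    (a := a2) (d := d2) (by linarith) (by linarith) (by
      rw [Complex.norm_real, Real.norm_eq_abs, sq_abs, ha, hd]
      linear_combination hkey + (2 + lam3 + lam1 * lam2) * hprod)
  have hQ := posSemidef_fin_two (𝕜 := ℂ) (b := ((lam1 - lam2 : ℝ) : ℂ))
    (a := b2) (d := c2) (by linarith) (by linarith) (by
      rw [Complex.norm_real, Real.norm_eq_abs, sq_abs, hb, hc]
      linear_combination hkey + (lam3 + lam1 * lam2 - 2) * hprod)
  rw [RCLike.star_def, Complex.conj_ofReal] at hP hQ
  exact (posSemidef_fin_four_of_blocks hP hQ).smul (by positivity)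
end

section
/- Let a, b, c, d ≥ 0 be real numbers, let φ₁, φ₂ ∈ ℝ, and let λ₁, λ₂ ∈ ℝ satisfy a·d·cos(φ₁) = λ₁ + λ₂ and b·c·cos(φ₂) = λ₁ − λ₂. Define the 4×4 complex matrices τ₁ = (1/4)·[[a², 0, 0, a d e^{−iφ₁}], [0, b², b c e^{iφ₂}, 0], [0, b c e^{−iφ₂}, c², 0], [a d e^{iφ₁}, 0, 0, d²]] and τ₂ = (1/4)·[[a², 0, 0, a d e^{iφ₁}], [0, b², b c e^{−iφ₂}, 0], [0, b c e^{iφ₂}, c², 0], [a d e^{−iφ₁}, 0, 0, d²]]. Then τ₁ and τ₂ are each positive semidefinite, and (1/2)τ₁ + (1/2)τ₂ = (1/4)·[[a², 0, 0, λ₁+λ₂], [0, b², λ₁−λ₂, 0], [0, λ₁−λ₂, c², 0], [λ₁+λ₂, 0, 0, d²]]. (This exhibits the Choi matrix of the channel as a convex combination of the Choi matrices of two quasi-extreme channels.) -/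
open Matrix
open scoped ComplexOrder

/-- The Choi matrix of the first quasi-extreme channel:
`τ₁ = (1/4)[[a²,0,0,ad e^{−iφ₁}],[0,b²,bc e^{iφ₂},0],[0,bc e^{−iφ₂},c²,0],
[ad e^{iφ₁},0,0,d²]]`. -/
noncomputable def quasiChoi1 (a b c d φ₁ φ₂ : ℝ) : Matrix (Fin 4) (Fin 4) ℂ :=
  ((1 : ℂ) / 4) •
    !![(a : ℂ) ^ 2, 0, 0, (a : ℂ) * (d : ℂ) * Complex.exp (-(Complex.I * φ₁));
       0, (b : ℂ) ^ 2, (b : ℂ) * (c : ℂ) * Complex.exp (Complex.I * φ₂), 0;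
       0, (b : ℂ) * (c : ℂ) * Complex.exp (-(Complex.I * φ₂)), (c : ℂ) ^ 2, 0;
       (a : ℂ) * (d : ℂ) * Complex.exp (Complex.I * φ₁), 0, 0, (d : ℂ) ^ 2]

/-- The Choi matrix of the second quasi-extreme channel:
`τ₂ = (1/4)[[a²,0,0,ad e^{iφ₁}],[0,b²,bc e^{−iφ₂},0],[0,bc e^{iφ₂},c²,0],
[ad e^{−iφ₁},0,0,d²]]`. -/
noncomputable def quasiChoi2 (a b c d φ₁ φ₂ : ℝ) : Matrix (Fin 4) (Fin 4) ℂ :=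
  ((1 : ℂ) / 4) •
    !![(a : ℂ) ^ 2, 0, 0, (a : ℂ) * (d : ℂ) * Complex.exp (Complex.I * φ₁);
       0, (b : ℂ) ^ 2, (b : ℂ) * (c : ℂ) * Complex.exp (-(Complex.I * φ₂)), 0;
       0, (b : ℂ) * (c : ℂ) * Complex.exp (Complex.I * φ₂), (c : ℂ) ^ 2, 0;
       (a : ℂ) * (d : ℂ) * Complex.exp (-(Complex.I * φ₁)), 0, 0, (d : ℂ) ^ 2]

lemma expE (x : ℝ) :
    Complex.exp (Complex.I * x) * Complex.exp (-(Complex.I * x)) = 1 := by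
  rw [← Complex.exp_add]; simp

lemma quasi_factor (a b c d φ₁ φ₂ : ℝ) :
    quasiChoi1 a b c d φ₁ φ₂ =
      (!![(a : ℂ)/2, 0, 0, (d : ℂ)/2 * Complex.exp (-(Complex.I * φ₁));
          0, (b : ℂ)/2, (c : ℂ)/2 * Complex.exp (Complex.I * φ₂), 0] :
        Matrix (Fin 2) (Fin 4) ℂ)ᴴ *
      !![(a : ℂ)/2, 0, 0, (d : ℂ)/2 * Complex.exp (-(Complex.I * φ₁));
          0, (b : ℂ)/2, (c : ℂ)/2 * Complex.exp (Complex.I * φ₂), 0] := by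
  ext i j
  fin_cases i <;> fin_cases j <;>
    simp [quasiChoi1, Matrix.mul_apply, Fin.sum_univ_succ, ← Complex.exp_conj,
      map_neg, _root_.map_mul, map_ofNat, Complex.conj_I, Complex.conj_ofReal] <;>
    try ring
  all_goals try linear_combination (-((d : ℂ) ^ 2 / 4)) * expE φ₁
  all_goals linear_combination (-((c : ℂ) ^ 2 / 4)) * expE φ₂

lemma quasi_factor2 (a b c d φ₁ φ₂ : ℝ) :
    quasiChoi2 a b c d φ₁ φ₂ =
      (!![(a : ℂ)/2, 0, 0, (d : ℂ)/2 * Complex.exp (Complex.I * φ₁);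
          0, (b : ℂ)/2, (c : ℂ)/2 * Complex.exp (-(Complex.I * φ₂)), 0] :
        Matrix (Fin 2) (Fin 4) ℂ)ᴴ *
      !![(a : ℂ)/2, 0, 0, (d : ℂ)/2 * Complex.exp (Complex.I * φ₁);
          0, (b : ℂ)/2, (c : ℂ)/2 * Complex.exp (-(Complex.I * φ₂)), 0] := by
  ext i j
  fin_cases i <;> fin_cases j <;>
    simp [quasiChoi2, Matrix.mul_apply, Fin.sum_univ_succ, ← Complex.exp_conj,
      map_neg, _root_.map_mul, map_ofNat, Complex.conj_I, Complex.conj_ofReal] <;>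
    try ring
  all_goals try linear_combination (-((d : ℂ) ^ 2 / 4)) * expE φ₁
  all_goals linear_combination (-((c : ℂ) ^ 2 / 4)) * expE φ₂

set_option maxHeartbeats 1000000 in
/-- With `a,b,c,d ≥ 0`, `ad cos φ₁ = λ₁ + λ₂` and `bc cos φ₂ = λ₁ − λ₂`,
the matrices `τ₁` and `τ₂` are positive semidefinite and
`(1/2)τ₁ + (1/2)τ₂ = (1/4)[[a²,0,0,λ₁+λ₂],[0,b²,λ₁−λ₂,0],[0,λ₁−λ₂,c²,0],[λ₁+λ₂,0,0,d²]]`. -/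
theorem choi_convex_decomposition (a b c d φ₁ φ₂ lam1 lam2 : ℝ)
    (ha : 0 ≤ a) (hb : 0 ≤ b) (hc : 0 ≤ c) (hd : 0 ≤ d)
    (h₁ : a * d * Real.cos φ₁ = lam1 + lam2)
    (h₂ : b * c * Real.cos φ₂ = lam1 - lam2) :
    (quasiChoi1 a b c d φ₁ φ₂).PosSemidef ∧ (quasiChoi2 a b c d φ₁ φ₂).PosSemidef ∧
      ((1 : ℂ) / 2) • quasiChoi1 a b c d φ₁ φ₂ + ((1 : ℂ) / 2) • quasiChoi2 a b c d φ₁ φ₂ =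
        ((1 : ℂ) / 4) •
          !![(a : ℂ) ^ 2, 0, 0, ((lam1 + lam2 : ℝ) : ℂ);
             0, (b : ℂ) ^ 2, ((lam1 - lam2 : ℝ) : ℂ), 0;
             0, ((lam1 - lam2 : ℝ) : ℂ), (c : ℂ) ^ 2, 0;
             ((lam1 + lam2 : ℝ) : ℂ), 0, 0, (d : ℂ) ^ 2] := by
  refine ⟨?_, ?_, ?_⟩
  · rw [quasi_factor]; exact Matrix.posSemidef_conjTranspose_mul_self _
  · rw [quasi_factor2]; exact Matrix.posSemidef_conjTranspose_mul_self _
  · have key : ∀ x : ℝ, Complex.exp (Complex.I * x) + Complex.exp (-(Complex.I * x))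
        = 2 * Complex.cos x := by
      intro x
      rw [Complex.cos]
      ring
    have k1 : ((a : ℂ)) * d * Real.cos φ₁ = ((lam1 : ℂ) + lam2) := by
      exact_mod_cast congrArg (Complex.ofReal) h₁
    have k2 : ((b : ℂ)) * c * Real.cos φ₂ = ((lam1 : ℂ) - lam2) := by
      exact_mod_cast congrArg (Complex.ofReal) h₂
    ext i j
    fin_cases i <;> fin_cases j <;>
      simp [quasiChoi1, quasiChoi2] <;>
      push_cast [← k1, ← k2]
    all_goals try simp only [Complex.ofReal_cos]
    all_goals try ring
    all_goals try linear_combination ((a : ℂ) * d / 8) * key φ₁ + ((b : ℂ) * c / 8) * key φ₂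
    all_goals try linear_combination ((a : ℂ) * d / 8) * key φ₁
    all_goals try linear_combination (-((a : ℂ) * d / 8)) * key φ₁
    all_goals try linear_combination ((b : ℂ) * c / 8) * key φ₂
    all_goals linear_combination (-((b : ℂ) * c / 8)) * key φ₂
end
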